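/- For every integer n ≥ 1, the number of primitive Lucas strings of length n equals Σ_{d | n} μ(n/d)·L_d, where μ is the Möbius function and the equality holds in the integers. -/

import Mathlib

open scoped Classical

/-- Cyclic shift `α`: maps `u₁u₂⋯uₙ` to `uₙu₁⋯uₙ₋₁`. -/
def cyc {α : Type*} (u : List α) : List α := u.rotate (u.length - 1)

/-- `listPow v k` is the concatenation of `k` copies of `v`. -/
def listPow {α : Type*} (v : List α) (k : ℕ) : List α := (List.replicate k v).flatten

/-- The period of `u`: the least `k > 0` with `cyc^[k] u = u`. -/
noncomputable def period {α : Type*} (u : List α) : ℕ := sInf {k | 0 < k ∧ cyc^[k] u = u}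

/-- `u` is primitive if it is not the concatenation of `k ≥ 2` copies of a shorter string. -/
def IsPrimitive {α : Type*} (u : List α) : Prop :=
  ∀ (v : List α) (k : ℕ), 2 ≤ k → v.length < u.length → u ≠ listPow v k

/-- The dihedral orbit of `u`: `{α^j(u) : 0 ≤ j < n} ∪ {α^j(β(u)) : 0 ≤ j < n}`,
where `β` is reversal. -/
noncomputable def dihedralOrbit {α : Type*} [DecidableEq α] (u : List α) : Finset (List α) :=
  ((Finset.range u.length).image fun j => cyc^[j] u) ∪
    ((Finset.range u.length).image fun j => cyc^[j] u.reverse)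

/-- Lucas numbers: `L₀ = 2`, `L₁ = 1`, `Lₙ = Lₙ₋₁ + Lₙ₋₂`. -/
def lucas : ℕ → ℕ
  | 0 => 2
  | 1 => 1
  | n + 2 => lucas (n + 1) + lucas n

/-- All binary strings of length `n`, as a finset of boolean lists. -/
def allBool (n : ℕ) : Finset (List Bool) :=
  (Finset.univ : Finset (Fin n → Bool)).image fun f => List.ofFn f

/-- A Fibonacci string: a binary string with no two consecutive 1s. -/
def IsFibStr (l : List Bool) : Prop := l.Chain' fun a b => a = false ∨ b = false

/-- The Fibonacci strings of length `n` (vertices of the Fibonacci cube `Γₙ`). -/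
noncomputable def fibStrings (n : ℕ) : Finset (List Bool) := (allBool n).filter IsFibStr

/-- A Lucas string: a binary string with no two consecutive 1s which does not both
begin and end with 1. -/
def IsLucasStr (l : List Bool) : Prop :=
  IsFibStr l ∧ ¬(l.head? = some true ∧ l.getLast? = some true)

/-- The Lucas strings of length `n` (vertices of the Lucas cube `Λₙ`). -/
noncomputable def lucasStrings (n : ℕ) : Finset (List Bool) := (allBool n).filter IsLucasStr

/-- Two strings differ in exactly one position. -/
def DifferOne (u v : List Bool) : Prop :=
  u.length = v.length ∧ (List.zipWith (fun a b => a != b) u v).count true = 1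

/-- The edges of the Fibonacci cube `Γₙ`, as unordered pairs of vertices. -/
noncomputable def fibEdges (n : ℕ) : Finset (Finset (List Bool)) :=
  ((fibStrings n ×ˢ fibStrings n).filter fun p => DifferOne p.1 p.2).image fun p => {p.1, p.2}

/-- The edges of the Lucas cube `Λₙ`, as unordered pairs of vertices. -/
noncomputable def lucasEdges (n : ℕ) : Finset (Finset (List Bool)) :=
  ((lucasStrings n ×ˢ lucasStrings n).filter fun p => DifferOne p.1 p.2).image fun p => {p.1, p.2}

/-- The orbit of a vertex under the reversal map `β`. -/
def revOrbit (u : List Bool) : Finset (List Bool) := {u, u.reverse}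

/-- The orbit of an edge under the reversal map `β`, acting by `β({u,v}) = {β(u),β(v)}`. -/
def revEdgeOrbit (e : Finset (List Bool)) : Finset (Finset (List Bool)) :=
  {e, e.image List.reverse}

/-- The orbit of an edge under the dihedral action on strings of length `n`:
`{α^j(e) : 0 ≤ j < n} ∪ {α^j(β(e)) : 0 ≤ j < n}`. -/
noncomputable def dihedralEdgeOrbit (n : ℕ) (e : Finset (List Bool)) :
    Finset (Finset (List Bool)) :=
  ((Finset.range n).image fun j => e.image fun u => cyc^[j] u) ∪
    ((Finset.range n).image fun j => e.image fun u => cyc^[j] u.reverse)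

/-!
Every nonempty word `u` is a power of its prefix of length `p`, where `p` is the least period of
`u` under rotation; `p` divides every rotation period, and this prefix is primitive. Conversely a
power `v ^ k` of a primitive word `v` has least rotation period `|v|`. Being a Lucas string is a
cyclic condition (`u` is Lucas iff `u ++ u` has no two consecutive 1s), so `v ^ k` is Lucas iff
`v` is. A Lucas string of length `n + 3` is `0w` or `10w0` with `w` a Fibonacci string, which
gives the count `L_n`. Sorting the `L_n` Lucas strings of length `n` by their least rotation
period therefore gives `∑_{d ∣ n} P_d = L_n`, where `P_d` counts the primitive ones of length `d`,
and Möbius inversion finishes the proof.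
-/

section ListPow

variable {α : Type*}

@[simp] lemma listPow_zero (v : List α) : listPow v 0 = [] := rfl

lemma listPow_succ (v : List α) (k : ℕ) : listPow v (k + 1) = v ++ listPow v k := by
  simp [listPow, List.replicate_succ]

@[simp] lemma listPow_one (v : List α) : listPow v 1 = v := by simp [listPow]

lemma listPow_succ' (v : List α) (k : ℕ) : listPow v (k + 1) = listPow v k ++ v := by
  simp [listPow, List.replicate_succ']

@[simp] lemma length_listPow (v : List α) (k : ℕ) : (listPow v k).length = k * v.length := by
  simp [listPow, List.length_flatten, List.sum_replicate]

lemma listPow_add (v : List α) (a b : ℕ) : listPow v (a + b) = listPow v a ++ listPow v b := by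
  simp only [listPow, List.replicate_add, List.flatten_append]

lemma listPow_mul (v : List α) (a b : ℕ) : listPow v (a * b) = listPow (listPow v a) b := by
  induction b with
  | zero => simp
  | succ b ih => rw [Nat.mul_succ, listPow_add, ih, listPow_succ']

lemma take_listPow (v : List α) {m k : ℕ} (h : m ≤ k) :
    (listPow v k).take (m * v.length) = listPow v m := by
  rw [← Nat.add_sub_cancel' h, listPow_add]
  exact List.take_left' (length_listPow v m)

lemma take_length_listPow (v : List α) {k : ℕ} (hk : k ≠ 0) : (listPow v k).take v.length = v := by
  simpa using take_listPow v (Nat.one_le_iff_ne_zero.2 hk)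

lemma getElem_listPow {v : List α} {k i : ℕ} (h : i < (listPow v k).length) :
    (listPow v k)[i] =
      v[i % v.length]'(Nat.mod_lt _ (Nat.pos_of_ne_zero fun h0 => by simp [h0] at h)) := by
  induction k generalizing i with
  | zero => simp at h
  | succ k ih =>
    simp only [listPow_succ, List.getElem_append]
    split_ifs with hi
    · simp only [Nat.mod_eq_of_lt hi]
    · simp only [ih, ← Nat.mod_eq_sub_mod (not_lt.1 hi)]

lemma head?_listPow (v : List α) {k : ℕ} (hk : k ≠ 0) : (listPow v k).head? = v.head? :=
  List.head?_flatten_replicate hk v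

lemma isChain_listPow_iff {R : α → α → Prop} (v : List α) {k : ℕ} (hk : 2 ≤ k) :
    (listPow v k).IsChain R ↔ (v ++ v).IsChain R := by
  induction k, hk using Nat.le_induction with
  | base => simp [listPow_succ]
  | succ k hk ih =>
    rw [listPow_succ, List.isChain_append, ih, List.isChain_append (l₁ := v),
      head?_listPow v (by omega)]
    tauto

end ListPow

section RotationPeriod

variable {α : Type*}

-- The same number as `period u`, which iterates the inverse rotation `cyc`; `minimalPeriod`
-- brings its divisibility API.
noncomputable def rotPeriod (u : List α) : ℕ := Function.minimalPeriod (fun l => l.rotate 1) u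

lemma iterate_rotate_one (u : List α) (m : ℕ) : (fun l => l.rotate 1)^[m] u = u.rotate m := by
  induction m with
  | zero => simp
  | succ m ih => rw [Function.iterate_succ_apply', ih, List.rotate_rotate]

lemma rotate_eq_self_iff_rotPeriod_dvd {u : List α} {m : ℕ} :
    u.rotate m = u ↔ rotPeriod u ∣ m := by
  rw [rotPeriod, ← Function.isPeriodicPt_iff_minimalPeriod_dvd, Function.IsPeriodicPt,
    Function.IsFixedPt, iterate_rotate_one]

lemma rotPeriod_dvd_length (u : List α) : rotPeriod u ∣ u.length :=
  rotate_eq_self_iff_rotPeriod_dvd.1 u.rotate_length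

lemma rotPeriod_pos {u : List α} (hu : u ≠ []) : 0 < rotPeriod u :=
  Nat.pos_of_dvd_of_pos (rotPeriod_dvd_length u) (List.length_pos_iff.2 hu)

lemma length_take_rotPeriod {u : List α} (hu : u ≠ []) :
    (u.take (rotPeriod u)).length = rotPeriod u := by
  simpa using Nat.le_of_dvd (List.length_pos_iff.2 hu) (rotPeriod_dvd_length u)

lemma rotate_listPow_length (v : List α) (k : ℕ) : (listPow v k).rotate v.length = listPow v k := by
  cases k with
  | zero => simp
  | succ k => rw [listPow_succ, List.rotate_append_length_eq, ← listPow_succ, listPow_succ']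

lemma eq_listPow_take_of_rotate_eq_self {u : List α} {d : ℕ} (hd : d ∣ u.length)
    (h : u.rotate d = u) : u = listPow (u.take d) (u.length / d) := by
  rcases eq_or_ne u [] with rfl | hu
  · simp
  have hn : 0 < u.length := List.length_pos_iff.2 hu
  have hd0 : 0 < d := Nat.pos_of_dvd_of_pos hd hn
  have hdn : d ≤ u.length := Nat.le_of_dvd hn hd
  have hperiodic : ∀ i (hi : i < u.length), u[i] = u[i % d]'((Nat.mod_lt i hd0).trans_le hdn) := by
    intro i hi
    induction i using Nat.strong_induction_on with
    | _ i ih =>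
      rcases lt_or_ge i d with hid | hid
      · simp only [Nat.mod_eq_of_lt hid]
      · have hshift : u[i] = u[i - d] := by
          conv_rhs => rw [List.getElem_of_eq h.symm]
          simp [List.getElem_rotate, Nat.sub_add_cancel hid, Nat.mod_eq_of_lt hi]
        simp only [hshift, ih (i - d) (by omega), ← Nat.mod_eq_sub_mod hid]
  apply List.ext_getElem (by simp [Nat.div_mul_cancel hd, hdn])
  intro i hi _
  rw [getElem_listPow, List.getElem_take, hperiodic i hi]
  simp [hdn]

lemma eq_listPow_take_rotPeriod (u : List α) :
    u = listPow (u.take (rotPeriod u)) (u.length / rotPeriod u) :=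
  eq_listPow_take_of_rotate_eq_self (rotPeriod_dvd_length u)
    (rotate_eq_self_iff_rotPeriod_dvd.2 dvd_rfl)

end RotationPeriod

section Primitive

variable {α : Type*}

lemma isPrimitive_take_rotPeriod {u : List α} (hu : u ≠ []) :
    IsPrimitive (u.take (rotPeriod u)) := by
  intro w k hk hlt heq
  have hlen : k * w.length = rotPeriod u := by
    rw [← length_take_rotPeriod hu, heq, length_listPow]
  have hw : 0 < w.length := Nat.pos_of_mul_pos_left (hlen ▸ rotPeriod_pos hu)
  have hrot : u.rotate w.length = u := by
    rw [eq_listPow_take_rotPeriod u, heq, ← listPow_mul, rotate_listPow_length]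
  have := Nat.le_of_dvd hw (rotate_eq_self_iff_rotPeriod_dvd.1 hrot)
  rw [length_take_rotPeriod hu] at hlt
  omega

lemma rotPeriod_listPow {v : List α} (hv : v ≠ []) (hprim : IsPrimitive v) {k : ℕ} (hk : k ≠ 0) :
    rotPeriod (listPow v k) = v.length := by
  set u := listPow v k
  set p := rotPeriod u
  have hvl : 0 < v.length := List.length_pos_iff.2 hv
  have hu : u ≠ [] := List.ne_nil_of_length_pos (by
    simpa [u] using Nat.mul_pos (Nat.pos_of_ne_zero hk) hvl)
  have hp : (u.take p).length = p := length_take_rotPeriod hu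
  obtain ⟨m, hm⟩ : p ∣ v.length :=
    rotate_eq_self_iff_rotPeriod_dvd.1 (rotate_listPow_length v k)
  have hmk : m ≤ u.length / p := by
    rw [Nat.le_div_iff_mul_le (rotPeriod_pos hu), length_listPow, mul_comm, ← hm]
    exact Nat.le_mul_of_pos_left _ (Nat.pos_of_ne_zero hk)
  have hv_eq : v = listPow (u.take p) m := by
    calc v = u.take v.length := (take_length_listPow v hk).symm
      _ = (listPow (u.take p) (u.length / p)).take (m * (u.take p).length) := by
        rw [← eq_listPow_take_rotPeriod, hp, hm, mul_comm]
      _ = listPow (u.take p) m := take_listPow _ hmk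
  have hm1 : m = 1 := by
    by_contra hm1
    have hm0 : m ≠ 0 := by rintro rfl; rw [mul_zero] at hm; omega
    exact hprim _ m (by omega) (by
      rw [hp, hm]; exact lt_mul_of_one_lt_right (rotPeriod_pos hu) (by omega)) hv_eq
  rw [hm, hm1, mul_one]

end Primitive

section LucasStrings

open Finset

lemma mem_allBool {n : ℕ} {l : List Bool} : l ∈ allBool n ↔ l.length = n := by
  simp only [allBool, mem_image, mem_univ, true_and]
  exact ⟨fun ⟨f, hf⟩ => hf ▸ List.length_ofFn, fun h => h ▸ ⟨l.get, List.ofFn_get l⟩⟩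

lemma mem_fibStrings {n : ℕ} {l : List Bool} :
    l ∈ fibStrings n ↔ l.length = n ∧ IsFibStr l := by
  rw [fibStrings, mem_filter, mem_allBool]

lemma mem_lucasStrings {n : ℕ} {l : List Bool} :
    l ∈ lucasStrings n ↔ l.length = n ∧ IsLucasStr l := by
  rw [lucasStrings, mem_filter, mem_allBool]

lemma isFibStr_iff (l : List Bool) : IsFibStr l ↔ l.IsChain (fun a b => a = false ∨ b = false) :=
  Iff.rfl

@[simp] lemma isFibStr_nil : IsFibStr [] := List.IsChain.nil

@[simp] lemma isFibStr_singleton (b : Bool) : IsFibStr [b] := List.IsChain.singleton b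

@[simp] lemma isFibStr_false_cons (l : List Bool) : IsFibStr (false :: l) ↔ IsFibStr l := by
  simp [isFibStr_iff, List.isChain_cons]

@[simp] lemma isFibStr_true_cons_cons (b : Bool) (l : List Bool) :
    IsFibStr (true :: b :: l) ↔ b = false ∧ IsFibStr (b :: l) := by
  simp [isFibStr_iff, List.isChain_cons_cons]

@[simp] lemma isFibStr_append_false (l : List Bool) : IsFibStr (l ++ [false]) ↔ IsFibStr l := by
  simp [isFibStr_iff, List.isChain_append]

lemma isLucasStr_iff_isFibStr_append_self (l : List Bool) : IsLucasStr l ↔ IsFibStr (l ++ l) := by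
  rw [IsLucasStr, isFibStr_iff, isFibStr_iff, List.isChain_append]
  generalize l.head? = x, l.getLast? = y
  rcases x with _ | _ | _ <;> rcases y with _ | _ | _ <;> simp

lemma isLucasStr_listPow_iff (v : List Bool) {k : ℕ} (hk : k ≠ 0) :
    IsLucasStr (listPow v k) ↔ IsLucasStr v := by
  rw [isLucasStr_iff_isFibStr_append_self, isLucasStr_iff_isFibStr_append_self, ← listPow_add,
    isFibStr_iff, isFibStr_iff, isChain_listPow_iff v (by omega)]

end LucasStrings

section Counting

open Finset

lemma card_image_false_cons_union {s t : Finset (List Bool)} {g : List Bool → List Bool}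
    (hg : g.Injective) : #(s.image (false :: ·) ∪ t.image (true :: g ·)) = #s + #t := by
  rw [card_union_of_disjoint (disjoint_left.2 (by simp)),
    card_image_of_injective _ List.cons_injective,
    card_image_of_injective _ fun _ _ h => hg (List.cons_injective h)]

lemma fibStrings_add_two (n : ℕ) : fibStrings (n + 2) =
    (fibStrings (n + 1)).image (false :: ·) ∪ (fibStrings n).image (true :: false :: ·) := by
  ext l
  simp only [mem_union, mem_image, mem_fibStrings]
  constructor
  · rintro ⟨hlen, hfib⟩
    match l, hlen, hfib with
    | false :: t, hlen, hfib => exact Or.inl ⟨t, ⟨by simpa using hlen, by simpa using hfib⟩, rfl⟩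
    | true :: b :: t, hlen, hfib =>
      obtain ⟨rfl, hfib⟩ := (isFibStr_true_cons_cons b t).1 hfib
      exact Or.inr ⟨t, ⟨by simpa using hlen, by simpa using hfib⟩, rfl⟩
  · rintro (⟨w, ⟨hlen, hw⟩, rfl⟩ | ⟨w, ⟨hlen, hw⟩, rfl⟩) <;> simp [hlen, hw]

lemma lucasStrings_add_three (n : ℕ) : lucasStrings (n + 3) =
    (fibStrings (n + 2)).image (false :: ·) ∪
      (fibStrings n).image (fun w => true :: false :: (w ++ [false])) := by
  ext l
  simp only [mem_union, mem_image, mem_lucasStrings, mem_fibStrings]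
  constructor
  · rintro ⟨hlen, hfib, hends⟩
    match l, hlen, hfib, hends with
    | false :: t, hlen, hfib, _ => exact Or.inl ⟨t, ⟨by simpa using hlen, by simpa using hfib⟩, rfl⟩
    | true :: b :: t, hlen, hfib, hends =>
      obtain ⟨rfl, hfib⟩ := (isFibStr_true_cons_cons b t).1 hfib
      obtain rfl | ⟨w, c, rfl⟩ := t.eq_nil_or_concat'
      · simp at hlen
      · cases c
        · exact Or.inr ⟨w, ⟨by simpa using hlen, by simpa using hfib⟩, rfl⟩
        · simp [List.getLast?_cons, List.getLast?_append] at hends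
  · rintro (⟨w, ⟨hlen, hw⟩, rfl⟩ | ⟨w, ⟨hlen, hw⟩, rfl⟩) <;>
      simp [IsLucasStr, List.getLast?_cons, List.getLast?_append, hlen, hw]

lemma card_fibStrings_add_two (n : ℕ) :
    #(fibStrings (n + 2)) = #(fibStrings (n + 1)) + #(fibStrings n) := by
  rw [fibStrings_add_two, card_image_false_cons_union List.cons_injective]

lemma card_lucasStrings_add_three (n : ℕ) :
    #(lucasStrings (n + 3)) = #(fibStrings (n + 2)) + #(fibStrings n) := by
  rw [lucasStrings_add_three,
    card_image_false_cons_union fun _ _ h => by simpa using h]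

lemma fibStrings_zero : fibStrings 0 = {[]} := by
  ext l
  simp only [mem_fibStrings, List.length_eq_zero_iff, mem_singleton]
  exact ⟨And.left, fun h => ⟨h, h ▸ isFibStr_nil⟩⟩

lemma fibStrings_one : fibStrings 1 = {[false], [true]} := by
  ext l
  simp only [mem_fibStrings, List.length_eq_one_iff, mem_insert, mem_singleton]
  constructor
  · rintro ⟨⟨b, rfl⟩, -⟩; cases b <;> simp
  · rintro (rfl | rfl) <;> simp

lemma lucasStrings_one : lucasStrings 1 = {[false]} := by
  ext l
  simp only [mem_lucasStrings, List.length_eq_one_iff, mem_singleton]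
  constructor
  · rintro ⟨⟨b, rfl⟩, -, hends⟩; cases b <;> simp_all
  · rintro rfl; simp [IsLucasStr]

lemma lucasStrings_two : lucasStrings 2 = {[false, false], [false, true], [true, false]} := by
  ext l
  simp only [mem_lucasStrings, List.length_eq_two, mem_insert, mem_singleton]
  constructor
  · rintro ⟨⟨a, b, rfl⟩, hfib, hends⟩; cases a <;> cases b <;> simp_all
  · rintro (rfl | rfl | rfl) <;> simp [IsLucasStr]

lemma lucas_add_three (n : ℕ) : lucas (n + 3) = #(fibStrings (n + 2)) + #(fibStrings n) := by
  induction n using Nat.twoStepInduction with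
  | zero => simp [lucas, card_fibStrings_add_two, fibStrings_one, fibStrings_zero]
  | one => simp [lucas, card_fibStrings_add_two, fibStrings_one, fibStrings_zero]
  | more n ih₀ ih₁ =>
    rw [show lucas (n + 2 + 3) = lucas (n + 1 + 3) + lucas (n + 3) from rfl, ih₀, ih₁,
      card_fibStrings_add_two (n + 2), card_fibStrings_add_two n]
    ring

lemma card_lucasStrings {n : ℕ} (hn : n ≠ 0) : #(lucasStrings n) = lucas n := by
  match n, hn with
  | 1, _ => simp [lucasStrings_one, lucas]
  | 2, _ => simp [lucasStrings_two, lucas]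
  | n + 3, _ => rw [card_lucasStrings_add_three, lucas_add_three]

end Counting

section PrimitiveLucasStrings

open Finset

lemma card_filter_rotPeriod_eq {n d : ℕ} (hd : d ∈ n.divisors) :
    #{u ∈ lucasStrings n | rotPeriod u = d} = #{v ∈ lucasStrings d | IsPrimitive v} := by
  obtain ⟨⟨k, rfl⟩, hn⟩ := Nat.mem_divisors.1 hd
  have hd0 : d ≠ 0 := left_ne_zero_of_mul hn
  have hk : k ≠ 0 := right_ne_zero_of_mul hn
  have hdk : d * k / d = k := Nat.mul_div_cancel_left k (Nat.pos_of_ne_zero hd0)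
  have hpow : ∀ u ∈ lucasStrings (d * k), rotPeriod u = d → u = listPow (u.take d) k :=
    fun u hu hper => by
      conv_lhs => rw [eq_listPow_take_rotPeriod u]
      rw [hper, (mem_lucasStrings.1 hu).1, hdk]
  refine card_bij' (fun u _ => u.take d) (fun v _ => listPow v k) ?_ ?_ ?_ ?_
  · intro u hu
    obtain ⟨hu, hper⟩ := mem_filter.1 hu
    have hu0 : u ≠ [] := List.ne_nil_of_length_pos (by rw [(mem_lucasStrings.1 hu).1]; positivity)
    rw [mem_filter, mem_lucasStrings, ← isLucasStr_listPow_iff _ hk, ← hpow u hu hper, ← hper]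
    exact ⟨⟨length_take_rotPeriod hu0, (mem_lucasStrings.1 hu).2⟩, isPrimitive_take_rotPeriod hu0⟩
  · intro v hv
    obtain ⟨hv, hprim⟩ := mem_filter.1 hv
    obtain ⟨hlen, hluc⟩ := mem_lucasStrings.1 hv
    have hv0 : v ≠ [] := List.ne_nil_of_length_pos (by rw [hlen]; positivity)
    rw [mem_filter, mem_lucasStrings, isLucasStr_listPow_iff _ hk, length_listPow,
      rotPeriod_listPow hv0 hprim hk, hlen, mul_comm]
    exact ⟨⟨rfl, hluc⟩, rfl⟩
  · intro u hu
    exact (hpow u (mem_filter.1 hu).1 (mem_filter.1 hu).2).symm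
  · intro v hv
    rw [← (mem_lucasStrings.1 (mem_filter.1 hv).1).1]
    exact take_length_listPow v hk

lemma sum_card_primitive_lucasStrings {n : ℕ} (hn : n ≠ 0) :
    ∑ d ∈ n.divisors, #{v ∈ lucasStrings d | IsPrimitive v} = lucas n := by
  have hmaps : (lucasStrings n : Set (List Bool)).MapsTo rotPeriod n.divisors := fun u hu => by
    rw [mem_coe, mem_lucasStrings] at hu
    exact Nat.mem_divisors.2 ⟨hu.1 ▸ rotPeriod_dvd_length u, hn⟩
  rw [← card_lucasStrings hn, card_eq_sum_card_fiberwise hmaps]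
  exact (sum_congr rfl fun d hd => card_filter_rotPeriod_eq hd).symm

end PrimitiveLucasStrings

/-- For `n ≥ 1`, the number of primitive Lucas strings of length `n` equals
`Σ_{d ∣ n} μ(n/d)·L_d` (in the integers). -/
theorem count_primitive_lucas (n : ℕ) (hn : 1 ≤ n) :
    ((((lucasStrings n).filter fun u => IsPrimitive u).card : ℤ))
      = ∑ d ∈ n.divisors, ArithmeticFunction.moebius (n / d) * (lucas d : ℤ) := by
  have hinv := (ArithmeticFunction.sum_eq_iff_sum_mul_moebius_eq
    (f := fun d => (((lucasStrings d).filter fun v => IsPrimitive v).card : ℤ))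
    (g := fun d => (lucas d : ℤ))).1
    (fun m hm => by exact_mod_cast sum_card_primitive_lucasStrings hm.ne') n hn
  rw [← hinv]
  exact Nat.sum_divisorsAntidiagonal' fun i j => ArithmeticFunction.moebius i * (lucas j : ℤ)
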